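/- arXiv:math/0505610 — 5 statements merged into one kernel-verified Lean document; each statement's English description precedes it below -/
import Mathlib

section
/- Let Φ have Lipschitz constant Λ_Φ (in the ℓ¹ sense on X^(N+1)), let τᵢ be Lipschitz with constant ≤ Λ_T, γ := Λ_Φ·Λ_T < 1, and suppose max_i ρ(vᵢ(t), vᵢ(t-1)) ≤ Ĉ·γ̂^t with γ̂ < 1. Then any solution u of u(t+1) = Φ(τ₀ u(t), τ₁ v₁(t), …) satisfies ρ(u(t+1), u(t)) ≤ γ^t·ρ(u(1),u(0)) + 2N·Ĉ·t·(max(γ, γ̂))^{t+1} for all t ≥ 1. -/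
/-!
Comparing the recursion at times `t + 1` and `t`, the Lipschitz bounds give, for the increments
`d t = ρ(u(t+1), u(t))`, the linear inequality `d (t + 1) ≤ γ d t + γ N Ĉ γ̂ ^ (t + 1)`.
Unrolling it and bounding both `γ` and `γ̂` by `max γ γ̂` yields
`d t ≤ γ ^ t d 0 + γ N Ĉ t (max γ γ̂) ^ t ≤ γ ^ t d 0 + N Ĉ t (max γ γ̂) ^ (t + 1)`.
-/

open Finset

theorem le_pow_mul_add_of_le_mul_add_pow {d : ℕ → ℝ} {γ γhat m K : ℝ} (hγ0 : 0 ≤ γ)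
    (hγm : γ ≤ m) (hγhat0 : 0 ≤ γhat) (hγhatm : γhat ≤ m) (hK : 0 ≤ K)
    (hd : ∀ t, d (t + 1) ≤ γ * d t + K * γhat ^ (t + 1)) (t : ℕ) :
    d t ≤ γ ^ t * d 0 + K * t * m ^ t := by
  have hm0 : 0 ≤ m := hγ0.trans hγm
  induction t with
  | zero => simp
  | succ t ih =>
    have hγ_pow : γ * (K * t * m ^ t) ≤ K * t * m ^ (t + 1) := by
      rw [pow_succ]
      nlinarith [mul_nonneg (mul_nonneg hK t.cast_nonneg) (pow_nonneg hm0 t)]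
    have hγhat_pow : γhat ^ (t + 1) ≤ m ^ (t + 1) := pow_le_pow_left₀ hγhat0 hγhatm _
    calc d (t + 1) ≤ γ * d t + K * γhat ^ (t + 1) := hd t
      _ ≤ γ * (γ ^ t * d 0 + K * t * m ^ t) + K * m ^ (t + 1) := by gcongr
      _ ≤ γ ^ (t + 1) * d 0 + K * t * m ^ (t + 1) + K * m ^ (t + 1) := by
        rw [pow_succ' γ]
        linear_combination hγ_pow
      _ = γ ^ (t + 1) * d 0 + K * ↑(t + 1) * m ^ (t + 1) := by push_cast; ring

section Recursion

variable {X : Type*} [MetricSpace X] {N : ℕ} {ΛΦ ΛT : ℝ}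
  {Φ : (Fin (N + 1) → X) → X} {τ0 : X → X} {τ : Fin N → X → X}

theorem dist_map_cons_le (hΛΦ : 0 ≤ ΛΦ)
    (hτ0 : ∀ x y, dist (τ0 x) (τ0 y) ≤ ΛT * dist x y)
    (hτ : ∀ i x y, dist (τ i x) (τ i y) ≤ ΛT * dist x y)
    (hΦ : ∀ z z' : Fin (N + 1) → X, dist (Φ z) (Φ z') ≤ ΛΦ * ∑ i, dist (z i) (z' i))
    (x x' : X) (y y' : Fin N → X) :
    dist (Φ (Fin.cons (τ0 x) fun i => τ i (y i))) (Φ (Fin.cons (τ0 x') fun i => τ i (y' i)))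
      ≤ ΛΦ * ΛT * (dist x x' + ∑ i, dist (y i) (y' i)) := by
  calc _ ≤ ΛΦ * (dist (τ0 x) (τ0 x') + ∑ i, dist (τ i (y i)) (τ i (y' i))) := by
        have h := hΦ (Fin.cons (τ0 x) fun i => τ i (y i)) (Fin.cons (τ0 x') fun i => τ i (y' i))
        rwa [Fin.sum_univ_succ] at h
    _ ≤ ΛΦ * (ΛT * dist x x' + ∑ i, ΛT * dist (y i) (y' i)) := by
        gcongr with i
        · exact hτ0 x x'
        · exact hτ i _ _
    _ = ΛΦ * ΛT * (dist x x' + ∑ i, dist (y i) (y' i)) := by rw [← mul_sum]; ring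

theorem dist_succ_le_of_map_cons (hΛΦ : 0 ≤ ΛΦ) (hΛT : 0 ≤ ΛT)
    (hτ0 : ∀ x y, dist (τ0 x) (τ0 y) ≤ ΛT * dist x y)
    (hτ : ∀ i x y, dist (τ i x) (τ i y) ≤ ΛT * dist x y)
    (hΦ : ∀ z z' : Fin (N + 1) → X, dist (Φ z) (Φ z') ≤ ΛΦ * ∑ i, dist (z i) (z' i))
    {v : Fin N → ℕ → X} {Chat γhat : ℝ}
    (hv : ∀ i t, dist (v i (t + 1)) (v i t) ≤ Chat * γhat ^ (t + 1))
    {u : ℕ → X} (hu : ∀ t, u (t + 1) = Φ (Fin.cons (τ0 (u t)) (fun i => τ i (v i t))))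
    (t : ℕ) :
    dist (u (t + 2)) (u (t + 1)) ≤
      ΛΦ * ΛT * dist (u (t + 1)) (u t) + ΛΦ * ΛT * N * Chat * γhat ^ (t + 1) := by
  have hv_sum : ∑ i, dist (v i (t + 1)) (v i t) ≤ N * (Chat * γhat ^ (t + 1)) := by
    simpa using sum_le_sum fun i (_ : i ∈ univ) => hv i t
  calc dist (u (t + 2)) (u (t + 1))
      ≤ ΛΦ * ΛT * (dist (u (t + 1)) (u t) + ∑ i, dist (v i (t + 1)) (v i t)) := by
        rw [hu (t + 1), hu t]
        exact dist_map_cons_le hΛΦ hτ0 hτ hΦ _ _ _ _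
    _ ≤ ΛΦ * ΛT * (dist (u (t + 1)) (u t) + N * (Chat * γhat ^ (t + 1))) := by gcongr
    _ = _ := by ring

end Recursion

theorem stmt_2_general {X : Type*} [MetricSpace X]
    (N : ℕ) (ΛΦ ΛT : ℝ) (hΛΦ : 0 ≤ ΛΦ) (hΛT : 0 ≤ ΛT)
    (γ : ℝ) (hγ : γ = ΛΦ * ΛT)
    (Φ : (Fin (N + 1) → X) → X) (τ0 : X → X) (τ : Fin N → X → X)
    (v : Fin N → ℕ → X)
    (Chat γhat : ℝ) (hChat : 0 ≤ Chat) (hγhat0 : 0 ≤ γhat)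
    (hτ0 : ∀ x y, dist (τ0 x) (τ0 y) ≤ ΛT * dist x y)
    (hτ : ∀ i x y, dist (τ i x) (τ i y) ≤ ΛT * dist x y)
    (hΦ : ∀ z z' : Fin (N + 1) → X,
      dist (Φ z) (Φ z') ≤ ΛΦ * ∑ i, dist (z i) (z' i))
    (hv : ∀ i t, dist (v i (t + 1)) (v i t) ≤ Chat * γhat ^ (t + 1))
    (u : ℕ → X)
    (hu : ∀ t, u (t + 1) = Φ (Fin.cons (τ0 (u t)) (fun i => τ i (v i t)))) :
    ∀ t, 1 ≤ t →
      dist (u (t + 1)) (u t) ≤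
        γ ^ t * dist (u 1) (u 0) +
          2 * N * Chat * t * (max γ γhat) ^ (t + 1) := by
  intro t _
  set m := max γ γhat
  have hγ0 : 0 ≤ γ := hγ ▸ mul_nonneg hΛΦ hΛT
  have hK : 0 ≤ γ * N * Chat := by positivity
  have hstep : ∀ t, dist (u (t + 1 + 1)) (u (t + 1)) ≤
      γ * dist (u (t + 1)) (u t) + γ * N * Chat * γhat ^ (t + 1) := by
    simpa only [hγ] using dist_succ_le_of_map_cons hΛΦ hΛT hτ0 hτ hΦ hv hu
  have hbound := le_pow_mul_add_of_le_mul_add_pow (d := fun t => dist (u (t + 1)) (u t))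
    hγ0 (le_max_left _ _) hγhat0 (le_max_right _ _) hK hstep t
  have hγm : γ * m ^ t ≤ m ^ (t + 1) := by
    rw [pow_succ']; gcongr; exact le_max_left _ _
  have hrest : 0 ≤ N * Chat * t * m ^ (t + 1) := by positivity
  calc dist (u (t + 1)) (u t) ≤ γ ^ t * dist (u 1) (u 0) + γ * N * Chat * t * m ^ t := hbound
    _ ≤ γ ^ t * dist (u 1) (u 0) + 2 * N * Chat * t * m ^ (t + 1) := by
      nlinarith [mul_le_mul_of_nonneg_left hγm (by positivity : (0 : ℝ) ≤ N * Chat * t)]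

/-- increment estimate for the non-autonomous recursion:
`ρ(u(t+1),u(t)) ≤ γ^t ρ(u(1),u(0)) + 2NĈt(max(γ,γ̂))^{t+1}`. -/
theorem stmt_2 {X : Type*} [MetricSpace X] [CompactSpace X]
    (N : ℕ) (ΛΦ ΛT : ℝ) (hΛΦ : 0 ≤ ΛΦ) (hΛT : 0 ≤ ΛT)
    (γ : ℝ) (hγ : γ = ΛΦ * ΛT) (hγ1 : γ < 1)
    (Φ : (Fin (N + 1) → X) → X) (τ0 : X → X) (τ : Fin N → X → X)
    (v : Fin N → ℕ → X)
    (Chat γhat : ℝ) (hChat : 0 ≤ Chat) (hγhat0 : 0 ≤ γhat) (hγhat : γhat < 1)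
    (hτ0 : ∀ x y, dist (τ0 x) (τ0 y) ≤ ΛT * dist x y)
    (hτ : ∀ i x y, dist (τ i x) (τ i y) ≤ ΛT * dist x y)
    (hΦ : ∀ z z' : Fin (N + 1) → X,
      dist (Φ z) (Φ z') ≤ ΛΦ * ∑ i, dist (z i) (z' i))
    (hv : ∀ i t, dist (v i (t + 1)) (v i t) ≤ Chat * γhat ^ (t + 1))
    (u : ℕ → X)
    (hu : ∀ t, u (t + 1) = Φ (Fin.cons (τ0 (u t)) (fun i => τ i (v i t)))) :
    ∀ t, 1 ≤ t →
      dist (u (t + 1)) (u t) ≤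
        γ ^ t * dist (u 1) (u 0) +
          2 * N * Chat * t * (max γ γhat) ^ (t + 1) :=
  stmt_2_general N ΛΦ ΛT hΛΦ hΛT γ hγ Φ τ0 τ v Chat γhat hChat hγhat0 hτ0 hτ hΦ hv u hu
end

section
/- Let B be a finite set of sites with an acyclic directed connectivity graph G such that every site in B is reachable in G from some site outside B, let each local map Tᵢ : X → X be Lipschitz with constant ≤ Λ_T, and let the interaction I satisfy ρ((I x)_ℓ, (I y)_ℓ) ≤ Λ_I · Σᵢ ρ(xᵢ, yᵢ) with ((I x)_ℓ depending only on coordinates at sites j with N(j) ≤ N(ℓ) for a topological ordering N). If Λ_I·Λ_T < 1, then for any fixed boundary values x|_{B^c} there exists a vector x̂|_B such that for every choice of initial data x|_B(0), the trajectory of the map (F x)_i = (I ∘ T⃗ x)_i for i ∈ B, (F x)_i = xᵢ for i ∉ B, converges pointwise to x̂|_B as t → ∞ (long range action). -/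
/-!
Order the sites of the box by the topological ordering `N`. The value at a site `ℓ` after one
step depends only on the previous values at `ℓ` and at its predecessors in the graph, and the
self-interaction contracts with factor `ΛI * ΛT < 1`. By induction along the ordering, the
discrepancy between two trajectories with the same boundary values decays geometrically at every
site of the box: a geometric forcing from the predecessors plus a contraction at `ℓ`. Comparing a
trajectory with its own shift shows it is Cauchy, hence convergent in the compact space `X`, and
every other trajectory with the same boundary values has the same limit.
-/

open Filter Topology Finset

theorem le_geometric_of_le_mul_add {q r D : ℝ} {d : ℕ → ℝ} (hq : 0 ≤ q) (hqr : q < r)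
    (hD : 0 ≤ D) (hd0 : 0 ≤ d 0) (hd : ∀ t, d (t + 1) ≤ q * d t + D * r ^ t) (t : ℕ) :
    d t ≤ (d 0 + D / (r - q)) * r ^ t := by
  have hrq : 0 < r - q := sub_pos.2 hqr
  set C := d 0 + D / (r - q) with hC_def
  have hC : q * C + D ≤ C * r := by
    have : C * (r - q) = d 0 * (r - q) + D := by rw [hC_def, add_mul, div_mul_cancel₀ _ hrq.ne']
    nlinarith
  induction t with
  | zero => rw [pow_zero, mul_one]; exact le_add_of_nonneg_right (div_nonneg hD hrq.le)
  | succ t ih =>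
    have hr : 0 ≤ r := hq.trans hqr.le
    calc d (t + 1) ≤ q * d t + D * r ^ t := hd t
      _ ≤ q * (C * r ^ t) + D * r ^ t := by gcongr
      _ = (q * C + D) * r ^ t := by ring
      _ ≤ C * r * r ^ t := by gcongr
      _ = C * r ^ (t + 1) := by ring

section BoxDynamics

open scoped Classical

variable {X S α : Type*} [Preorder α] {B : Finset S} {F : (S → X) → (S → X)}
  {E : S → S → Prop} {N : S → α}

theorem iterate_apply_of_notMem (hFout : ∀ x, ∀ j ∉ B, F x j = x j) (x : S → X) (t : ℕ)
    {j : S} (hj : j ∉ B) : F^[t] x j = x j := by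
  induction t with
  | zero => rfl
  | succ t ih => rw [Function.iterate_succ_apply', hFout _ j hj, ih]

theorem card_filter_lt_lt_of_lt {i ℓ : S} (hi : i ∈ B) (h : N i < N ℓ) :
    #(B.filter (N · < N i)) < #(B.filter (N · < N ℓ)) :=
  card_lt_card <| (ssubset_iff_of_subset fun _ hj =>
    mem_filter.2 ⟨(mem_filter.1 hj).1, (mem_filter.1 hj).2.trans h⟩).2
    ⟨i, mem_filter.2 ⟨hi, h⟩, fun hi' => lt_irrefl _ (mem_filter.1 hi').2⟩

theorem dist_apply_le_of_eq_off_box [MetricSpace X] [DecidableEq S] {T : S → X → X}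
    {I : (S → X) → (S → X)} {ΛT ΛI : ℝ} (hΛI0 : 0 ≤ ΛI)
    (hT : ∀ i x y, dist (T i x) (T i y) ≤ ΛT * dist x y)
    (hIlip : ∀ (ℓ : S) (U : Finset S) (x y : S → X), (∀ i, i ∉ U → x i = y i) →
        dist (I x ℓ) (I y ℓ) ≤ ΛI * ∑ i ∈ U, dist (x i) (y i))
    (hdep : ∀ (ℓ : S) (x y : S → X), x ℓ = y ℓ → (∀ j, E j ℓ → x j = y j) →
        I x ℓ = I y ℓ)
    (huni : ∀ i j, i ∈ B → j ∈ B → E i j → N i < N j)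
    (hF : ∀ x i, F x i = if i ∈ B then I (fun j => T j (x j)) i else x i)
    {x y : S → X} (hxy : ∀ j ∉ B, x j = y j) {ℓ : S} (hℓ : ℓ ∈ B) :
    dist (F x ℓ) (F y ℓ) ≤
      ΛI * ΛT * (dist (x ℓ) (y ℓ) + ∑ i ∈ B.filter (E · ℓ), dist (x i) (y i)) := by
  set P := B.filter (E · ℓ)
  have hℓP : ℓ ∉ P := fun h => lt_irrefl _ (huni ℓ ℓ hℓ hℓ (mem_filter.1 h).2)
  -- `z` agrees with `x` wherever `(I ·) ℓ` looks, and with `y` outside `insert ℓ P`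
  set z : S → X := fun j => if j = ℓ ∨ E j ℓ then x j else y j with hz
  have hFx : F x ℓ = I (fun j => T j (z j)) ℓ := by
    rw [hF, if_pos hℓ]
    exact hdep ℓ _ _ (by simp [hz]) fun j hj => by simp [hz, hj]
  have hzy : ∀ j ∉ insert ℓ P, z j = y j := by
    intro j hj
    rw [mem_insert, not_or] at hj
    by_cases hjℓ : E j ℓ
    · have hjB : j ∉ B := fun hjB => hj.2 (mem_filter.2 ⟨hjB, hjℓ⟩)
      simp [hz, hjℓ, hxy j hjB]
    · simp [hz, hj.1, hjℓ]
  have hzx : ∀ j ∈ insert ℓ P, z j = x j := by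
    intro j hj
    refine if_pos ?_
    rcases mem_insert.1 hj with h | h
    exacts [Or.inl h, Or.inr (mem_filter.1 h).2]
  rw [hFx, hF, if_pos hℓ]
  calc _ ≤ ΛI * ∑ i ∈ insert ℓ P, dist (T i (z i)) (T i (y i)) :=
        hIlip ℓ _ _ _ fun j hj => by simp only [hzy j hj]
    _ ≤ ΛI * ∑ i ∈ insert ℓ P, ΛT * dist (x i) (y i) := by
        gcongr with i hi
        rw [← hzx i hi]
        exact hT i _ _
    _ = _ := by rw [sum_insert hℓP, ← mul_sum]; ring

theorem exists_dist_iterate_le_geometric [MetricSpace X] {q r : ℝ} (hq : 0 ≤ q) (hqr : q < r)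
    (hFout : ∀ x, ∀ j ∉ B, F x j = x j)
    (hstep : ∀ x y : S → X, (∀ j ∉ B, x j = y j) → ∀ ℓ ∈ B,
      dist (F x ℓ) (F y ℓ) ≤
        q * (dist (x ℓ) (y ℓ) + ∑ i ∈ B.filter (E · ℓ), dist (x i) (y i)))
    (huni : ∀ i j, i ∈ B → j ∈ B → E i j → N i < N j)
    {x y : S → X} (hxy : ∀ j ∉ B, x j = y j) (ℓ : S) (hℓ : ℓ ∈ B) :
    ∃ C, ∀ t, dist (F^[t] x ℓ) (F^[t] y ℓ) ≤ C * r ^ t := by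
  induction ℓ using (measure fun ℓ => #(B.filter (N · < N ℓ))).wf.induction with
  | _ ℓ ih =>
    have hpred : ∀ i ∈ B.filter (E · ℓ),
        ∃ C, ∀ t, dist (F^[t] x i) (F^[t] y i) ≤ C * r ^ t := by
      intro i hi
      obtain ⟨hiB, hiℓ⟩ := mem_filter.1 hi
      exact ih i (card_filter_lt_lt_of_lt hiB (huni i ℓ hiB hℓ hiℓ)) hiB
    choose! C hC using hpred
    have hiter : ∀ t, ∀ j ∉ B, F^[t] x j = F^[t] y j := fun t j hj => by
      rw [iterate_apply_of_notMem hFout x t hj, iterate_apply_of_notMem hFout y t hj, hxy j hj]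
    have hD : 0 ≤ q * ∑ i ∈ B.filter (E · ℓ), C i :=
      mul_nonneg hq (sum_nonneg fun i hi => by simpa using dist_nonneg.trans (hC i hi 0))
    refine ⟨_, le_geometric_of_le_mul_add (d := fun t => dist (F^[t] x ℓ) (F^[t] y ℓ))
      hq hqr hD dist_nonneg fun t => ?_⟩
    simp only [Function.iterate_succ_apply']
    calc _ ≤ q * (dist (F^[t] x ℓ) (F^[t] y ℓ) +
            ∑ i ∈ B.filter (E · ℓ), dist (F^[t] x i) (F^[t] y i)) :=
          hstep _ _ (hiter t) ℓ hℓ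
      _ ≤ q * (dist (F^[t] x ℓ) (F^[t] y ℓ) +
            ∑ i ∈ B.filter (E · ℓ), C i * r ^ t) := by
          gcongr with i hi
          exact hC i hi t
      _ = _ := by rw [← sum_mul]; ring

end BoxDynamics

theorem stmt_5_general {X : Type*} [MetricSpace X] [CompactSpace X]
    {S : Type*} [DecidableEq S] (B : Finset S)
    (T : S → X → X) (I : (S → X) → (S → X))
    (ΛT ΛI : ℝ) (hΛT : 0 ≤ ΛT) (hΛI0 : 0 ≤ ΛI)
    (hcontr : ΛI * ΛT < 1)
    (hT : ∀ i x y, dist (T i x) (T i y) ≤ ΛT * dist x y)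
    (hIlip : ∀ (ℓ : S) (F : Finset S) (x y : S → X), (∀ i, i ∉ F → x i = y i) →
        dist (I x ℓ) (I y ℓ) ≤ ΛI * ∑ i ∈ F, dist (x i) (y i))
    -- connectivity graph: `E j ℓ` means `(I x)_ℓ` depends on `x_j`
    (E : S → S → Prop)
    (hdep : ∀ (ℓ : S) (x y : S → X), x ℓ = y ℓ → (∀ j, E j ℓ → x j = y j) →
        I x ℓ = I y ℓ)
    -- unidirectionality: a topological ordering of the sites of `B`
    (N : S → ℤ)
    (huni : ∀ i j, i ∈ B → j ∈ B → E i j → N i < N j)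
    -- the dynamics in the box with frozen boundary conditions
    (F : (S → X) → (S → X))
    (hF : ∀ x i, F x i = if i ∈ B then I (fun j => T j (x j)) i else x i)
    -- fixed boundary values
    (xb : S → X) :
    ∃ xhat : S → X, ∀ x0 : S → X, (∀ i, i ∉ B → x0 i = xb i) →
      ∀ i ∈ B, Tendsto (fun t => F^[t] x0 i) atTop (𝓝 (xhat i)) := by
  obtain ⟨r, hqr, hr1⟩ := exists_between hcontr
  have hr0 : 0 ≤ r := (mul_nonneg hΛI0 hΛT).trans hqr.le
  have hFout : ∀ x, ∀ j ∉ B, F x j = x j := fun x j hj => by rw [hF, if_neg hj]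
  have hdecay : ∀ x y : S → X, (∀ j ∉ B, x j = y j) → ∀ ℓ ∈ B,
      ∃ C, ∀ t, dist (F^[t] x ℓ) (F^[t] y ℓ) ≤ C * r ^ t := fun x y hxy =>
    exists_dist_iterate_le_geometric (mul_nonneg hΛI0 hΛT) hqr hFout
      (fun _ _ hxy _ hℓ => dist_apply_le_of_eq_off_box hΛI0 hT hIlip hdep huni hF hxy hℓ)
      huni hxy
  have hlim : ∀ ℓ, ∃ a, ℓ ∈ B → Tendsto (fun t => F^[t] xb ℓ) atTop (𝓝 a) := by
    intro ℓ
    by_cases hℓ : ℓ ∈ B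
    · obtain ⟨C, hC⟩ := hdecay xb (F xb) (fun j hj => (hFout xb j hj).symm) ℓ hℓ
      obtain ⟨a, ha⟩ := cauchySeq_tendsto_of_complete <|
        cauchySeq_of_le_geometric (f := fun t => F^[t] xb ℓ) r C hr1
        fun t => by rw [Function.iterate_succ_apply]; exact hC t
      exact ⟨a, fun _ => ha⟩
    · exact ⟨xb ℓ, fun h => absurd h hℓ⟩
  choose xhat hxhat using hlim
  refine ⟨xhat, fun x0 hx0 ℓ hℓ => ?_⟩
  obtain ⟨C, hC⟩ := hdecay xb x0 (fun j hj => (hx0 j hj).symm) ℓ hℓ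
  refine (hxhat ℓ hℓ).congr_dist (squeeze_zero (fun _ => dist_nonneg) hC ?_)
  simpa using (tendsto_pow_atTop_nhds_zero_of_lt_one hr0 hr1).const_mul C

/-- long range action. In a finite box `B` with unidirectional
(acyclic) interaction, every site reachable from outside `B`, local maps
Lipschitz with constant `ΛT` and interaction ℓ¹-Lipschitz with constant `ΛI`,
`ΛI * ΛT < 1`, the asymptotic dynamics inside `B` is completely determined by
the boundary conditions: there is a limit solution `x̂|_B` attracting every
initial datum inside the box. -/
theorem stmt_5 {X : Type*} [MetricSpace X] [CompactSpace X]
    {S : Type*} [Countable S] [DecidableEq S] (B : Finset S)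
    (T : S → X → X) (I : (S → X) → (S → X)) (hIcont : Continuous I)
    (ΛT ΛI : ℝ) (hΛT : 0 ≤ ΛT) (hΛI0 : 0 ≤ ΛI) (hΛI : ΛI < 1)
    (hcontr : ΛI * ΛT < 1)
    (hT : ∀ i x y, dist (T i x) (T i y) ≤ ΛT * dist x y)
    (hIlip : ∀ (ℓ : S) (F : Finset S) (x y : S → X), (∀ i, i ∉ F → x i = y i) →
        dist (I x ℓ) (I y ℓ) ≤ ΛI * ∑ i ∈ F, dist (x i) (y i))
    (hIdiag : ∀ C : X, I (fun _ => C) = fun _ => C)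
    -- connectivity graph: `E j ℓ` means `(I x)_ℓ` depends on `x_j`
    (E : S → S → Prop)
    (hdep : ∀ (ℓ : S) (x y : S → X), x ℓ = y ℓ → (∀ j, E j ℓ → x j = y j) →
        I x ℓ = I y ℓ)
    -- unidirectionality: a topological ordering of the sites of `B`
    (N : S → ℤ) (hNinj : Set.InjOn N (B : Set S))
    (huni : ∀ i j, i ∈ B → j ∈ B → E i j → N i < N j)
    -- every site of `B` is reachable in the graph from outside of `B`
    (hreach : ∀ i ∈ B, ∃ j, j ∉ B ∧ Relation.TransGen E j i)
    -- the dynamics in the box with frozen boundary conditions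
    (F : (S → X) → (S → X))
    (hF : ∀ x i, F x i = if i ∈ B then I (fun j => T j (x j)) i else x i)
    -- fixed boundary values
    (xb : S → X) :
    ∃ xhat : S → X, ∀ x0 : S → X, (∀ i, i ∉ B → x0 i = xb i) →
      ∀ i ∈ B, Tendsto (fun t => F^[t] x0 i) atTop (𝓝 (xhat i)) :=
  stmt_5_general B T I ΛT ΛI hΛT hΛI0 hcontr hT hIlip E hdep N huni F hF xb
end

section
/- In the one-dimensional linear unidirectional model with T x = a x + b, a > 1, (1−c)a < 1, the distance between limit solutions corresponding to two homogeneous boundary conditions v and v' grows exponentially in the distance from the boundary: if u_k, u_k' denote the limit values at the k-th site from the boundary (defined recursively by u_k = (1−c)·T u_k + c·T u_{k−1} with u_0 = v, u_0' = v'), then |u_k − u_k'| = (c a/(c a − (a−1)))^k · |v − v'|, with base c a/(c a − (a−1)) > 1. -/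
/-!
The fixed-point equation at site `k + 1` is affine in the limit value at site `k`, and the
constant terms cancel in the difference of two solutions: with
`d = c a - (a - 1) = 1 - (1 - c) a`, it reads `d (u_{k+1} - u'_{k+1}) = c a (u_k - u'_k)`.
Hence the differences form a geometric sequence with ratio `c a / d`, and this ratio exceeds `1`
because `c a - d = a - 1 > 0` and `d > 0`.
-/

lemma eq_pow_mul_of_succ_eq_mul {M : Type*} [Monoid M] {x : ℕ → M} {r : M}
    (h : ∀ k, x (k + 1) = r * x k) (k : ℕ) : x k = r ^ k * x 0 := by
  induction k with
  | zero => rw [pow_zero, one_mul]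
  | succ k ih => rw [h, ih, pow_succ', mul_assoc]

lemma one_lt_mul_div_sub {a c : ℝ} (ha : 1 < a) (hcontr : (1 - c) * a < 1) :
    1 < c * a / (c * a - (a - 1)) := by
  rw [one_lt_div (by linarith)]
  linarith

lemma sub_succ_eq_mul_sub {a b c : ℝ} {u u' : ℕ → ℝ} (hcontr : (1 - c) * a < 1)
    (hu : ∀ k, u (k + 1) = (1 - c) * (a * u (k + 1) + b) + c * (a * u k + b))
    (hu' : ∀ k, u' (k + 1) = (1 - c) * (a * u' (k + 1) + b) + c * (a * u' k + b)) (k : ℕ) :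
    u (k + 1) - u' (k + 1) = c * a / (c * a - (a - 1)) * (u k - u' k) := by
  have hd : c * a - (a - 1) ≠ 0 := by linarith
  rw [div_mul_eq_mul_div, eq_div_iff hd]
  linear_combination hu k - hu' k

theorem stmt_8_general (a b c v v' : ℝ) (u u' : ℕ → ℝ)
    (ha : 1 < a)
    (hcontr : (1 - c) * a < 1)
    (hu0 : u 0 = v) (hu'0 : u' 0 = v')
    (hu : ∀ k, u (k + 1) = (1 - c) * (a * u (k + 1) + b) + c * (a * u k + b))
    (hu' : ∀ k, u' (k + 1) = (1 - c) * (a * u' (k + 1) + b) + c * (a * u' k + b)) :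
    (∀ k, |u k - u' k| = (c * a / (c * a - (a - 1))) ^ k * |v - v'|) ∧
      1 < c * a / (c * a - (a - 1)) := by
  have hr := one_lt_mul_div_sub ha hcontr
  refine ⟨fun k => ?_, hr⟩
  have hgeom := eq_pow_mul_of_succ_eq_mul (x := fun k => u k - u' k)
    (sub_succ_eq_mul_sub hcontr hu hu') k
  rw [hgeom, abs_mul, abs_pow, abs_of_pos (zero_lt_one.trans hr), hu0, hu'0]

/-- in the one-dimensional linear unidirectional model the
distance between limit solutions for two homogeneous boundary conditions
grows exponentially with the distance from the boundary. -/
theorem stmt_8 (a b c v v' : ℝ) (u u' : ℕ → ℝ)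
    (ha : 1 < a) (hc0 : 0 < c) (hc1 : c < 1)
    (hcontr : (1 - c) * a < 1)
    (hu0 : u 0 = v) (hu'0 : u' 0 = v')
    (hu : ∀ k, u (k + 1) = (1 - c) * (a * u (k + 1) + b) + c * (a * u k + b))
    (hu' : ∀ k, u' (k + 1) = (1 - c) * (a * u' (k + 1) + b) + c * (a * u' k + b)) :
    (∀ k, |u k - u' k| = (c * a / (c * a - (a - 1))) ^ k * |v - v'|) ∧
      1 < c * a / (c * a - (a - 1)) :=
  stmt_8_general a b c v v' u u' ha hcontr hu0 hu'0 hu hu'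
end

section
/- Under the hypotheses of the long range action theorem but with 'free' boundary conditions—i.e., the dynamics is (F x)_i = (I ∘ T⃗ x)_i for i ∈ B and (F x)_i = Tᵢ xᵢ for i ∉ B—for any initial boundary data x|_{B^c}(0) there exists a (time-dependent) vector-function x̂(t) such that for all initial data x|_B(0), the distance between F^t x(0) restricted to B and x̂(t) tends to 0 as t → ∞. -/
open Filter Topology Finset

/-! The boundary sites evolve on their own, so two orbits with the same boundary data agree off
`B` for all times, and `x̂(t)` can be taken to be the orbit of the boundary data itself. On `B`
the distance `dₖ` between the two orbits satisfies `dₖ(t+1) ≤ q (dₖ(t) + ∑ⱼ dⱼ(t))` with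
`q = Λ_I Λ_T < 1`, the sum running over the sites of `B` that feed into `k`. Ranking the sites of
`B` by `r k = #{j ∈ B | N j < N k}`, which strictly increases along edges, the weights `K ^ r k`
with `K` large turn this triangular system into a plain contraction with some rate `ρ < 1`. -/

section TriangularContraction

variable {ι : Type*} (B : Finset ι) (pred : ι → Finset ι) (r : ι → ℕ) {q C : ℝ}
  (d : ℕ → ι → ℝ)

theorem le_mul_pow_of_triangular_contraction {K ρ : ℝ} (hq : 0 ≤ q) (hC : 0 ≤ C)
    (hK : 1 ≤ K) (hρ : q * (K + #B) ≤ ρ * K)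
    (hpred : ∀ k ∈ B, ∀ j ∈ pred k, j ∈ B ∧ r j < r k) (hd0 : ∀ k ∈ B, d 0 k ≤ C)
    (hd : ∀ t, ∀ k ∈ B, d (t + 1) k ≤ q * (d t k + ∑ j ∈ pred k, d t j)) (t : ℕ) :
    ∀ k ∈ B, d t k ≤ C * K ^ r k * ρ ^ t := by
  have hK0 : 0 < K := zero_lt_one.trans_le hK
  have hρ0 : 0 ≤ ρ := nonneg_of_mul_nonneg_left (hρ.trans' (by positivity)) hK0
  have hweight : ∀ k ∈ B, q * (K ^ r k + ∑ j ∈ pred k, K ^ r j) ≤ ρ * K ^ r k := by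
    intro k hk
    have hsum : K * ∑ j ∈ pred k, K ^ r j ≤ #B * K ^ r k := calc
      K * ∑ j ∈ pred k, K ^ r j = ∑ j ∈ pred k, K ^ (r j + 1) := by
        simp only [mul_sum, pow_succ']
      _ ≤ #(pred k) • K ^ r k :=
        sum_le_card_nsmul _ _ _ fun j hj => pow_le_pow_right₀ hK (hpred k hk j hj).2
      _ ≤ #B * K ^ r k := by
        rw [nsmul_eq_mul]
        gcongr
        exact fun j hj => (hpred k hk j hj).1
    refine le_of_mul_le_mul_left ?_ hK0
    nlinarith [pow_pos hK0 (r k)]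
  induction t with
  | zero =>
    intro k hk
    simpa using (hd0 k hk).trans (le_mul_of_one_le_right hC (one_le_pow₀ hK))
  | succ t ih =>
    intro k hk
    calc d (t + 1) k ≤ q * (d t k + ∑ j ∈ pred k, d t j) := hd t k hk
      _ ≤ q * (C * K ^ r k * ρ ^ t + ∑ j ∈ pred k, C * K ^ r j * ρ ^ t) := by
        gcongr with j hj
        · exact ih k hk
        · exact ih j (hpred k hk j hj).1
      _ = C * ρ ^ t * (q * (K ^ r k + ∑ j ∈ pred k, K ^ r j)) := by
        rw [← sum_mul, ← mul_sum]; ring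
      _ ≤ C * ρ ^ t * (ρ * K ^ r k) := mul_le_mul_of_nonneg_left (hweight k hk) (by positivity)
      _ = C * K ^ r k * ρ ^ (t + 1) := by ring

theorem tendsto_zero_of_triangular_contraction (hq0 : 0 ≤ q) (hq1 : q < 1)
    (hpred : ∀ k ∈ B, ∀ j ∈ pred k, j ∈ B ∧ r j < r k) (hd_nonneg : ∀ t k, 0 ≤ d t k)
    (hd0 : ∀ k ∈ B, d 0 k ≤ C)
    (hd : ∀ t, ∀ k ∈ B, d (t + 1) k ≤ q * (d t k + ∑ j ∈ pred k, d t j)) :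
    ∀ k ∈ B, Tendsto (fun t => d t k) atTop (𝓝 0) := by
  intro k hk
  set ρ := (1 + q) / 2
  set K := 1 + 2 * q * #B / (1 - q)
  have hK : 1 ≤ K := le_add_of_nonneg_right (div_nonneg (by positivity) (by linarith))
  have hρ : q * (K + #B) ≤ ρ * K := by
    have h1q : 1 - q ≠ 0 := by linarith
    have : (1 - q) / 2 * K = (1 - q) / 2 + q * #B := by
      simp only [K]; field_simp
    simp only [ρ]; linarith
  have hbound := le_mul_pow_of_triangular_contraction B pred r d hq0
    ((hd_nonneg 0 k).trans (hd0 k hk)) hK hρ hpred hd0 hd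
  have hρ1 : ρ < 1 := by simp only [ρ]; linarith
  have hlim := (tendsto_pow_atTop_nhds_zero_of_lt_one (by positivity) hρ1).const_mul (C * K ^ r k)
  rw [mul_zero] at hlim
  exact squeeze_zero (fun t => hd_nonneg t k) (fun t => hbound t k hk) hlim

end TriangularContraction

theorem Finset.card_filter_lt_lt_of_lt {α β : Type*} [Preorder β] [DecidableLT β]
    (s : Finset α) (f : α → β) {i j : α} (hi : i ∈ s) (hij : f i < f j) :
    #{k ∈ s | f k < f i} < #{k ∈ s | f k < f j} := by
  refine card_lt_card ⟨fun k hk => ?_, fun h => ?_⟩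
  · simp only [mem_filter] at hk ⊢
    exact ⟨hk.1, hk.2.trans hij⟩
  · exact lt_irrefl _ (mem_filter.mp (h (mem_filter.mpr ⟨hi, hij⟩))).2

theorem iterate_apply_eq_of_forall_not_mem {X S : Type*} {B : Finset S} {T : S → X → X}
    {F : (S → X) → S → X} (hF : ∀ x, ∀ i ∉ B, F x i = T i (x i)) {x y : S → X}
    (hxy : ∀ i ∉ B, x i = y i) (t : ℕ) : ∀ i ∉ B, F^[t] x i = F^[t] y i := by
  induction t with
  | zero => exact hxy
  | succ t ih =>
    intro i hi
    rw [Function.iterate_succ_apply', Function.iterate_succ_apply', hF _ i hi, hF _ i hi, ih i hi]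

section FreeBoundaryDynamics

variable {X S : Type*} [PseudoMetricSpace X] [DecidableEq S]

theorem dist_apply_le_sum_insert (I : (S → X) → S → X) (E : S → S → Prop) {ΛI : ℝ}
    (hIlip : ∀ (ℓ : S) (F : Finset S) (x y : S → X), (∀ i, i ∉ F → x i = y i) →
        dist (I x ℓ) (I y ℓ) ≤ ΛI * ∑ i ∈ F, dist (x i) (y i))
    (hdep : ∀ (ℓ : S) (x y : S → X), x ℓ = y ℓ → (∀ j, E j ℓ → x j = y j) →
        I x ℓ = I y ℓ)
    {k : S} {P : Finset S} {u v : S → X} (huv : ∀ j, E j k → j ∉ P → u j = v j) :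
    dist (I u k) (I v k) ≤ ΛI * ∑ j ∈ insert k P, dist (u j) (v j) := by
  -- `w` agrees with `v` on every input of site `k`, and with `u` off `insert k P`
  set w : S → X := fun j => if j ∈ insert k P then v j else u j
  have hw : I w k = I v k := hdep k w v (by simp [w]) fun j hj => by
    by_cases hjP : j ∈ insert k P
    · simp only [w, if_pos hjP]
    · simp only [w, if_neg hjP]
      exact huv j hj fun h => hjP (mem_insert_of_mem h)
  have hlip := hIlip k (insert k P) u w fun j hj => by simp only [w, if_neg hj]
  have hsum : ∑ j ∈ insert k P, dist (u j) (w j) = ∑ j ∈ insert k P, dist (u j) (v j) :=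
    sum_congr rfl fun j hj => by simp only [w, if_pos hj]
  rwa [hw, hsum] at hlip

theorem dist_apply_le_mul_dist_add_sum_filter {B : Finset S} {T : S → X → X}
    {I : (S → X) → S → X} {F : (S → X) → S → X} {E : S → S → Prop} [DecidableRel E]
    {ΛT ΛI : ℝ} (hΛI0 : 0 ≤ ΛI) (hT : ∀ i x y, dist (T i x) (T i y) ≤ ΛT * dist x y)
    (hIlip : ∀ (ℓ : S) (F : Finset S) (x y : S → X), (∀ i, i ∉ F → x i = y i) →
        dist (I x ℓ) (I y ℓ) ≤ ΛI * ∑ i ∈ F, dist (x i) (y i))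
    (hdep : ∀ (ℓ : S) (x y : S → X), x ℓ = y ℓ → (∀ j, E j ℓ → x j = y j) →
        I x ℓ = I y ℓ)
    (hF : ∀ x i, F x i = if i ∈ B then I (fun j => T j (x j)) i else T i (x i))
    {k : S} (hk : k ∈ B) (hkk : ¬E k k) {x y : S → X} (hxy : ∀ i ∉ B, x i = y i) :
    dist (F x k) (F y k) ≤
      ΛI * ΛT * (dist (x k) (y k) + ∑ j ∈ B with E j k, dist (x j) (y j)) := by
  have hinputs : ∀ j, E j k → j ∉ {j ∈ B | E j k} → T j (x j) = T j (y j) :=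
    fun j hj hjP => by rw [hxy j fun hjB => hjP (mem_filter.mpr ⟨hjB, hj⟩)]
  have hkP : k ∉ {j ∈ B | E j k} := fun h => hkk (mem_filter.mp h).2
  calc dist (F x k) (F y k)
      ≤ ΛI * ∑ j ∈ insert k {j ∈ B | E j k}, dist (T j (x j)) (T j (y j)) := by
        rw [hF, hF, if_pos hk, if_pos hk]
        exact dist_apply_le_sum_insert I E hIlip hdep hinputs
    _ ≤ ΛI * ∑ j ∈ insert k {j ∈ B | E j k}, ΛT * dist (x j) (y j) := by
        gcongr with j; exact hT j _ _
    _ = ΛI * ΛT * (dist (x k) (y k) + ∑ j ∈ B with E j k, dist (x j) (y j)) := by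
        rw [← mul_sum, sum_insert hkP]; ring

end FreeBoundaryDynamics

theorem stmt_10_general {X : Type*} [MetricSpace X] [CompactSpace X]
    {S : Type*} [DecidableEq S] (B : Finset S)
    (T : S → X → X) (I : (S → X) → (S → X))
    (ΛT ΛI : ℝ) (hΛT : 0 ≤ ΛT) (hΛI0 : 0 ≤ ΛI)
    (hcontr : ΛI * ΛT < 1)
    (hT : ∀ i x y, dist (T i x) (T i y) ≤ ΛT * dist x y)
    (hIlip : ∀ (ℓ : S) (F : Finset S) (x y : S → X), (∀ i, i ∉ F → x i = y i) →
        dist (I x ℓ) (I y ℓ) ≤ ΛI * ∑ i ∈ F, dist (x i) (y i))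
    (E : S → S → Prop)
    (hdep : ∀ (ℓ : S) (x y : S → X), x ℓ = y ℓ → (∀ j, E j ℓ → x j = y j) →
        I x ℓ = I y ℓ)
    (N : S → ℤ)
    (huni : ∀ i j, i ∈ B → j ∈ B → E i j → N i < N j)
    -- the dynamics with free boundary conditions
    (F : (S → X) → (S → X))
    (hF : ∀ x i, F x i = if i ∈ B then I (fun j => T j (x j)) i else T i (x i))
    -- initial boundary data
    (xb : S → X) :
    ∃ xhat : ℕ → S → X, ∀ x0 : S → X, (∀ i, i ∉ B → x0 i = xb i) →
      ∀ i ∈ B, Tendsto (fun t => dist (F^[t] x0 i) (xhat t i)) atTop (𝓝 0) := by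
  classical
  refine ⟨fun t => F^[t] xb, fun x0 hx0 => ?_⟩
  have hdiam (x y : X) : dist x y ≤ Metric.diam (Set.univ : Set X) :=
    Metric.dist_le_diam_of_mem isCompact_univ.isBounded trivial trivial
  have hpred : ∀ k ∈ B, ∀ j ∈ {j ∈ B | E j k},
      j ∈ B ∧ #{i ∈ B | N i < N j} < #{i ∈ B | N i < N k} := fun k hk j hj =>
    have hjk := mem_filter.mp hj
    ⟨hjk.1, card_filter_lt_lt_of_lt B N hjk.1 (huni j k hjk.1 hk hjk.2)⟩
  have hagree := iterate_apply_eq_of_forall_not_mem (T := T) (F := F)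
    (fun x i hi => by rw [hF, if_neg hi]) hx0
  refine tendsto_zero_of_triangular_contraction B _ _ (fun t k => dist (F^[t] x0 k) (F^[t] xb k))
    (mul_nonneg hΛI0 hΛT) hcontr hpred (fun _ _ => dist_nonneg) (fun _ _ => hdiam _ _)
    fun t k hk => ?_
  simp only [Function.iterate_succ_apply']
  exact dist_apply_le_mul_dist_add_sum_filter hΛI0 hT hIlip hdep hF hk
    (fun hkk => lt_irrefl _ (huni k k hk hk hkk)) (hagree t)

/-- long range action with free boundary conditions: the
boundary sites evolve autonomously under their local maps, and there is a
time-dependent limit solution `x̂(t)` attracting every initial datum inside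
the box. -/
theorem stmt_10 {X : Type*} [MetricSpace X] [CompactSpace X]
    {S : Type*} [Countable S] [DecidableEq S] (B : Finset S)
    (T : S → X → X) (I : (S → X) → (S → X)) (hIcont : Continuous I)
    (ΛT ΛI : ℝ) (hΛT : 0 ≤ ΛT) (hΛI0 : 0 ≤ ΛI) (hΛI : ΛI < 1)
    (hcontr : ΛI * ΛT < 1)
    (hT : ∀ i x y, dist (T i x) (T i y) ≤ ΛT * dist x y)
    (hIlip : ∀ (ℓ : S) (F : Finset S) (x y : S → X), (∀ i, i ∉ F → x i = y i) →
        dist (I x ℓ) (I y ℓ) ≤ ΛI * ∑ i ∈ F, dist (x i) (y i))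
    (hIdiag : ∀ C : X, I (fun _ => C) = fun _ => C)
    (E : S → S → Prop)
    (hdep : ∀ (ℓ : S) (x y : S → X), x ℓ = y ℓ → (∀ j, E j ℓ → x j = y j) →
        I x ℓ = I y ℓ)
    (N : S → ℤ) (hNinj : Set.InjOn N (B : Set S))
    (huni : ∀ i j, i ∈ B → j ∈ B → E i j → N i < N j)
    (hreach : ∀ i ∈ B, ∃ j, j ∉ B ∧ Relation.TransGen E j i)
    -- the dynamics with free boundary conditions
    (F : (S → X) → (S → X))
    (hF : ∀ x i, F x i = if i ∈ B then I (fun j => T j (x j)) i else T i (x i))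
    -- initial boundary data
    (xb : S → X) :
    ∃ xhat : ℕ → S → X, ∀ x0 : S → X, (∀ i, i ∉ B → x0 i = xb i) →
      ∀ i ∈ B, Tendsto (fun t => dist (F^[t] x0 i) (xhat t i)) atTop (𝓝 0) :=
  stmt_10_general B T I ΛT ΛI hΛT hΛI0 hcontr hT hIlip E hdep N huni F hF xb
end

section
/- Let I : X^S → X^S be an interaction satisfying ρ((I x)_ℓ, (I y)_ℓ) ≤ Λ_I·Σᵢ ρ(xᵢ, yᵢ) for all ℓ, and let π_ℓ denote projection of measures on X^S to the ℓ-th coordinate. If μ⃗, ν⃗ are probability measures on X^S that are product-decomposable at coordinate ℓ as μ⃗ = μ ⊗ μ_ℓ^⊥ and ν⃗ = ν ⊗ μ_ℓ^⊥ (same off-ℓ marginal μ_ℓ^⊥), then ρ*(π_ℓ I* μ⃗, π_ℓ I* ν⃗) ≤ Λ_I · ρ*(μ, ν) in the Hutchinson metric on measures on X. -/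
/-!
Disintegrate both measures along the common off-`ℓ` factor: for a fixed environment `z`, the
`ℓ`-th output `a ↦ (I (update z ℓ a)) ℓ` is `Λ_I`-Lipschitz in the `ℓ`-th input, so against a
1-Lipschitz test function the difference of the `z`-fibre integrals is at most `Λ_I · ρ*(μ, ν)`.
Integrating this bound over `z` (Fubini) gives the claim.
-/

open MeasureTheory

/-- The Hutchinson (Kantorovich–Wasserstein-1) distance between two measures. -/
noncomputable def hutchinsonDist {X : Type*} [MetricSpace X] [MeasurableSpace X]
    (μ ν : Measure X) : ℝ :=
  ⨆ φ : {φ : X → ℝ // LipschitzWith 1 φ}, (∫ x, φ.1 x ∂μ - ∫ x, φ.1 x ∂ν)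

open scoped NNReal

theorem Continuous.integrable_of_compactSpace {X E : Type*} [TopologicalSpace X] [CompactSpace X]
    [MeasurableSpace X] [OpensMeasurableSpace X] [NormedAddCommGroup E] {f : X → E}
    (hf : Continuous f) (μ : Measure X) [IsFiniteMeasure μ] : Integrable f μ :=
  hf.integrable_of_hasCompactSupport (HasCompactSupport.of_compactSpace f)

section Hutchinson

variable {X : Type*} [MetricSpace X] [CompactSpace X] [MeasurableSpace X] [BorelSpace X]

theorem bddAbove_range_integral_sub_integral (μ ν : Measure X) [IsProbabilityMeasure μ]
    [IsProbabilityMeasure ν] :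
    BddAbove (Set.range fun φ : {φ : X → ℝ // LipschitzWith 1 φ} =>
      ∫ x, φ.1 x ∂μ - ∫ x, φ.1 x ∂ν) := by
  obtain ⟨x₀⟩ := nonempty_of_isProbabilityMeasure μ
  set D := Metric.diam (Set.univ : Set X)
  refine ⟨2 * D, ?_⟩
  rintro _ ⟨⟨φ, hφ⟩, rfl⟩
  have hosc (x : X) : ‖φ x - φ x₀‖ ≤ D := by
    simpa [← Real.dist_eq] using (hφ.dist_le_mul x x₀).trans
      (by simpa using Metric.dist_le_diam_of_mem isCompact_univ.isBounded trivial trivial)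
  have hshift (κ : Measure X) [IsProbabilityMeasure κ] :
      ∫ x, φ x ∂κ = ∫ x, (φ x - φ x₀) ∂κ + φ x₀ := by
    rw [integral_sub (hφ.continuous.integrable_of_compactSpace κ) (integrable_const _)]
    simp
  have hbound (κ : Measure X) [IsProbabilityMeasure κ] : |∫ x, (φ x - φ x₀) ∂κ| ≤ D := by
    simpa using norm_integral_le_of_norm_le_const (μ := κ) (ae_of_all _ hosc)
  dsimp only
  rw [hshift μ, hshift ν]
  linarith [abs_le.1 (hbound μ), abs_le.1 (hbound ν)]

theorem integral_sub_integral_le_hutchinsonDist (μ ν : Measure X) [IsProbabilityMeasure μ]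
    [IsProbabilityMeasure ν] {φ : X → ℝ} (hφ : LipschitzWith 1 φ) :
    ∫ x, φ x ∂μ - ∫ x, φ x ∂ν ≤ hutchinsonDist μ ν :=
  le_ciSup (bddAbove_range_integral_sub_integral μ ν) (⟨φ, hφ⟩ : {φ : X → ℝ // LipschitzWith 1 φ})

theorem integral_sub_integral_le_mul_hutchinsonDist (μ ν : Measure X) [IsProbabilityMeasure μ]
    [IsProbabilityMeasure ν] {K : ℝ≥0} {φ : X → ℝ} (hφ : LipschitzWith K φ) :
    ∫ x, φ x ∂μ - ∫ x, φ x ∂ν ≤ K * hutchinsonDist μ ν := by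
  rcases eq_or_ne K 0 with rfl | hK
  · obtain ⟨x₀⟩ := nonempty_of_isProbabilityMeasure μ
    have hconst : φ = fun _ => φ x₀ := funext fun x => by
      simpa using hφ.dist_le_mul x x₀
    rw [hconst]
    simp
  · have hscaled : LipschitzWith 1 fun x => (K⁻¹ : ℝ) * φ x := by
      simpa [inv_mul_cancel₀ hK, Function.comp_def] using (lipschitzWith_smul (K⁻¹ : ℝ)).comp hφ
    have h := integral_sub_integral_le_hutchinsonDist μ ν hscaled
    rw [integral_const_mul, integral_const_mul, ← mul_sub] at h
    calc ∫ x, φ x ∂μ - ∫ x, φ x ∂ν = K * ((K⁻¹ : ℝ) * (∫ x, φ x ∂μ - ∫ x, φ x ∂ν)) := by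
          field_simp
      _ ≤ K * hutchinsonDist μ ν := by gcongr

theorem hutchinsonDist_map_prod_le {Z : Type*} [MeasurableSpace Z] (ρ : Measure Z)
    [IsProbabilityMeasure ρ] {f : X × Z → X} (hf : Measurable f) {K : ℝ≥0}
    (hfK : ∀ z, LipschitzWith K fun a => f (a, z)) (μ ν : Measure X) [IsProbabilityMeasure μ]
    [IsProbabilityMeasure ν] :
    hutchinsonDist ((μ.prod ρ).map f) ((ν.prod ρ).map f) ≤ K * hutchinsonDist μ ν := by
  have : Nonempty {φ : X → ℝ // LipschitzWith 1 φ} := ⟨⟨fun _ => 0, LipschitzWith.const' 0⟩⟩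
  refine ciSup_le fun ⟨φ, hφ⟩ => ?_
  have hint (κ : Measure X) [IsProbabilityMeasure κ] : Integrable (fun p => φ (f p)) (κ.prod ρ) :=
    (hφ.continuous.integrable_of_compactSpace _).comp_measurable hf
  have hfibre (z : Z) :
      ∫ a, φ (f (a, z)) ∂μ - ∫ a, φ (f (a, z)) ∂ν ≤ K * hutchinsonDist μ ν := by
    simpa using integral_sub_integral_le_mul_hutchinsonDist μ ν (hφ.comp (hfK z))
  dsimp only
  rw [integral_map hf.aemeasurable hφ.continuous.aestronglyMeasurable,
    integral_map hf.aemeasurable hφ.continuous.aestronglyMeasurable,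
    integral_prod_symm _ (hint μ), integral_prod_symm _ (hint ν),
    ← integral_sub (hint μ).integral_prod_right (hint ν).integral_prod_right]
  calc _ ≤ ∫ _, K * hutchinsonDist μ ν ∂ρ :=
        integral_mono ((hint μ).integral_prod_right.sub (hint ν).integral_prod_right)
          (integrable_const _) hfibre
    _ = K * hutchinsonDist μ ν := by simp

end Hutchinson

theorem stmt_13_general {X : Type*} [MetricSpace X] [CompactSpace X]
    [MeasurableSpace X] [BorelSpace X]
    {S : Type*} [DecidableEq S]
    (I : (S → X) → (S → X)) (hIm : Measurable I)
    (ΛI : ℝ) (hΛI0 : 0 ≤ ΛI)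
    (hIlip : ∀ (ℓ : S) (F : Finset S) (x y : S → X), (∀ i, i ∉ F → x i = y i) →
        dist (I x ℓ) (I y ℓ) ≤ ΛI * ∑ i ∈ F, dist (x i) (y i))
    (ℓ : S)
    (μ ν : Measure X) [IsProbabilityMeasure μ] [IsProbabilityMeasure ν]
    -- the common off-`ℓ` distribution
    (μperp : Measure (S → X)) [IsProbabilityMeasure μperp]
    (μvec νvec : Measure (S → X))
    (hμvec : μvec = (μ.prod μperp).map fun p => Function.update p.2 ℓ p.1)
    (hνvec : νvec = (ν.prod μperp).map fun p => Function.update p.2 ℓ p.1) :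
    hutchinsonDist ((μvec.map I).map fun x => x ℓ)
        ((νvec.map I).map fun x => x ℓ) ≤ ΛI * hutchinsonDist μ ν := by
  subst hμvec hνvec
  have hupdate : Measurable fun p : X × (S → X) => Function.update p.2 ℓ p.1 :=
    measurable_update'.comp (measurable_snd.prodMk measurable_fst)
  have hlip (z : S → X) : LipschitzWith ΛI.toNNReal fun a => I (Function.update z ℓ a) ℓ :=
    LipschitzWith.of_dist_le_mul fun a b => by
      simpa [hΛI0] using hIlip ℓ {ℓ} (Function.update z ℓ a) (Function.update z ℓ b)
        fun i hi => by simp [Finset.mem_singleton.not.1 hi]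
  rw [Measure.map_map (measurable_pi_apply ℓ) hIm, Measure.map_map (measurable_pi_apply ℓ) hIm,
    Measure.map_map ((measurable_pi_apply ℓ).comp hIm) hupdate,
    Measure.map_map ((measurable_pi_apply ℓ).comp hIm) hupdate]
  have h := hutchinsonDist_map_prod_le μperp
    (((measurable_pi_apply ℓ).comp hIm).comp hupdate) hlip μ ν
  rwa [Real.coe_toNNReal ΛI hΛI0] at h

/-- the `ℓ`-th marginal of the pushforward under an
ℓ¹-Lipschitz interaction `I` contracts the Hutchinson distance by the factor
`Λ_I`, for measures that differ only in their (independent) `ℓ`-th coordinate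
distribution. -/
theorem stmt_13 {X : Type*} [MetricSpace X] [CompactSpace X]
    [MeasurableSpace X] [BorelSpace X]
    {S : Type*} [Countable S] [DecidableEq S]
    (I : (S → X) → (S → X)) (hIm : Measurable I)
    (ΛI : ℝ) (hΛI0 : 0 ≤ ΛI)
    (hIlip : ∀ (ℓ : S) (F : Finset S) (x y : S → X), (∀ i, i ∉ F → x i = y i) →
        dist (I x ℓ) (I y ℓ) ≤ ΛI * ∑ i ∈ F, dist (x i) (y i))
    (ℓ : S)
    (μ ν : Measure X) [IsProbabilityMeasure μ] [IsProbabilityMeasure ν]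
    -- the common off-`ℓ` distribution
    (μperp : Measure (S → X)) [IsProbabilityMeasure μperp]
    (μvec νvec : Measure (S → X))
    (hμvec : μvec = (μ.prod μperp).map fun p => Function.update p.2 ℓ p.1)
    (hνvec : νvec = (ν.prod μperp).map fun p => Function.update p.2 ℓ p.1) :
    hutchinsonDist ((μvec.map I).map fun x => x ℓ)
        ((νvec.map I).map fun x => x ℓ) ≤ ΛI * hutchinsonDist μ ν :=
  stmt_13_general I hIm ΛI hΛI0 hIlip ℓ μ ν μperp μvec νvec hμvec hνvec
end
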